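/- arXiv:2603.21254 — 4 statements merged into one kernel-verified Lean document; each statement's English description precedes it below -/
import Mathlib

section
/- Let r be a positive natural number and let K, R, Q be r×r real matrices such that K is skew-symmetric (Kᵀ = -K), R is symmetric positive definite, and Q is symmetric positive definite. Then the matrix A = (K - R) * Q is Hurwitz: every eigenvalue μ ∈ ℂ of the complexification of A (the matrix obtained by mapping each real entry of A into ℂ) satisfies Re μ < 0. -/
/-! If `A v = μ v` with `v ≠ 0`, put `y = Q v`. Then `yᴴ (K - R) y = μ · vᴴ Q v`. Since `K` is
skew-Hermitian, the left side has real part `-yᴴ R y < 0`, while `vᴴ Q v > 0`; hence `Re μ < 0`.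
A real positive definite matrix stays positive definite over `ℂ`, being of the form `Bᵀ B` with
`B` invertible. -/

open Matrix
open scoped ComplexOrder

namespace Matrix

variable {m n 𝕜 : Type*} [RCLike 𝕜]

lemma conjTranspose_map_algebraMap_real (M : Matrix m n ℝ) :
    (M.map (algebraMap ℝ 𝕜))ᴴ = Mᵀ.map (algebraMap ℝ 𝕜) := by
  rw [← conjTranspose_map _ fun x => algebraMap_star_comm x, conjTranspose_eq_transpose_of_trivial]

variable [Fintype n]

lemma PosSemidef.map_algebraMap_real {P : Matrix n n ℝ} (hP : P.PosSemidef) :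
    (P.map (algebraMap ℝ 𝕜)).PosSemidef := by
  classical
  open scoped MatrixOrder in
  obtain ⟨B, rfl⟩ := CStarAlgebra.nonneg_iff_eq_star_mul_self.mp hP.nonneg
  rw [Matrix.map_mul, star_eq_conjTranspose, conjTranspose_eq_transpose_of_trivial,
    ← conjTranspose_map_algebraMap_real]
  exact posSemidef_conjTranspose_mul_self _

lemma PosDef.map_algebraMap_real [DecidableEq n] {P : Matrix n n ℝ} (hP : P.PosDef) :
    (P.map (algebraMap ℝ 𝕜)).PosDef := by
  refine hP.posSemidef.map_algebraMap_real.posDef_iff_det_ne_zero.mpr ?_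
  rw [← RingHom.mapMatrix_apply, ← RingHom.map_det]
  exact (map_ne_zero _).mpr hP.det_pos.ne'

lemma re_star_dotProduct_mulVec_eq_zero {K : Matrix n n 𝕜} (hK : Kᴴ = -K) (x : n → 𝕜) :
    RCLike.re (star x ⬝ᵥ (K *ᵥ x)) = 0 := by
  have hconj : star (star x ⬝ᵥ (K *ᵥ x)) = -(star x ⬝ᵥ (K *ᵥ x)) := by
    rw [← star_dotProduct, star_mulVec, ← dotProduct_mulVec, hK, neg_mulVec, dotProduct_neg]
  have := congrArg RCLike.re hconj
  rw [RCLike.star_def, RCLike.conj_re, map_neg] at this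
  linarith

theorem re_lt_zero_of_mulVec_eq_smul {K R Q : Matrix n n 𝕜} (hK : Kᴴ = -K) (hR : R.PosDef)
    (hQ : Q.PosDef) {μ : 𝕜} {v : n → 𝕜} (hv : v ≠ 0) (hμ : ((K - R) * Q) *ᵥ v = μ • v) :
    RCLike.re μ < 0 := by
  set y := Q *ᵥ v
  have hQv := RCLike.pos_iff.mp (hQ.dotProduct_mulVec_pos hv)
  have hy : y ≠ 0 := fun h => by simp [y, h] at hQv
  have key : star y ⬝ᵥ ((K - R) *ᵥ y) = μ * (star v ⬝ᵥ (Q *ᵥ v)) := by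
    rw [mulVec_mulVec, hμ, dotProduct_smul, smul_eq_mul, star_mulVec, ← dotProduct_mulVec,
      hQ.isHermitian.eq]
  have hre := congrArg RCLike.re key
  rw [sub_mulVec, dotProduct_sub, map_sub, re_star_dotProduct_mulVec_eq_zero hK, RCLike.mul_re,
    hQv.2, mul_zero, sub_zero, zero_sub] at hre
  nlinarith [hR.re_dotProduct_pos hy]

theorem re_lt_zero_of_mem_spectrum [DecidableEq n] {K R Q : Matrix n n 𝕜} (hK : Kᴴ = -K)
    (hR : R.PosDef) (hQ : Q.PosDef) {μ : 𝕜} (hμ : μ ∈ spectrum 𝕜 ((K - R) * Q)) :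
    RCLike.re μ < 0 := by
  rw [← spectrum_toLin', ← Module.End.hasEigenvalue_iff_mem_spectrum] at hμ
  obtain ⟨v, hv⟩ := hμ.exists_hasEigenvector
  exact re_lt_zero_of_mulVec_eq_smul hK hR hQ hv.2 hv.apply_eq_smul

end Matrix

theorem stmt0_general (r : ℕ) (K R Q : Matrix (Fin r) (Fin r) ℝ)
    (hK : Kᵀ = -K) (hR : R.PosDef) (hQ : Q.PosDef) :
    ∀ μ ∈ spectrum ℂ (((K - R) * Q).map (algebraMap ℝ ℂ)), μ.re < 0 := by
  intro μ hμ
  have hKc : (K.map (algebraMap ℝ ℂ))ᴴ = -K.map (algebraMap ℝ ℂ) := by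
    rw [conjTranspose_map_algebraMap_real, hK, Matrix.map_neg _ (map_neg _)]
  rw [Matrix.map_mul, Matrix.map_sub _ (map_sub _)] at hμ
  exact re_lt_zero_of_mem_spectrum hKc hR.map_algebraMap_real hQ.map_algebraMap_real hμ

/-- Proposition 1 (Lemma 2 in Gillis–Sharma), sufficiency direction:
if `K` is skew-symmetric, `R` is symmetric positive definite, and `Q` is
symmetric positive definite, then `A = (K - R) * Q` is Hurwitz. -/
theorem stmt0 (r : ℕ) (hr : 0 < r) (K R Q : Matrix (Fin r) (Fin r) ℝ)
    (hK : Kᵀ = -K) (hR : R.PosDef) (hQ : Q.PosDef) :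
    ∀ μ ∈ spectrum ℂ (((K - R) * Q).map (algebraMap ℝ ℂ)), μ.re < 0 :=
  stmt0_general r K R Q hK hR hQ
end

section
/- Let r be a positive natural number and let A be an r×r real matrix that is Hurwitz, i.e., every eigenvalue μ ∈ ℂ of the complexification of A satisfies Re μ < 0. Then there exist r×r real matrices K, R, Q with K skew-symmetric (Kᵀ = -K), R symmetric positive definite, and Q symmetric positive definite, such that A = (K - R) * Q. -/
/-!
If every eigenvalue of `A` has real part `< c < 0`, then on each generalized eigenspace of the
complexification `exp (t A)` acts as `e^{tμ}` times a polynomial in `t`, so `exp (t A)` is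
`O(e^{ct})`. Hence the Gramian `P = ∫₀^∞ e^{tA} e^{tAᵀ} dt` converges; it is positive definite,
and integrating `d/dt (e^{tA} e^{tAᵀ}) = A e^{tA} e^{tAᵀ} + e^{tA} e^{tAᵀ} Aᵀ` over `(0, ∞)`
gives the Lyapunov equation `A P + P Aᵀ = -1`. Finally `A = (K - R) P⁻¹` with the skew part
`K = (A P - P Aᵀ) / 2` and `R = -(A P + P Aᵀ) / 2 = 1 / 2`.
-/

open Matrix NormedSpace Asymptotics Filter MeasureTheory Set Topology
open scoped Nat

-- Matrices carry the `L∞` operator norm; the product topology is switched off so that `exp`,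
-- derivatives and integrals all refer to the topology of this norm.
attribute [local instance] Matrix.linftyOpNormedAddCommGroup Matrix.linftyOpNormedRing
  Matrix.linftyOpNormedAlgebra Matrix.linftyOpNormedSpace
attribute [-instance] instTopologicalSpaceMatrix Matrix.instUniformSpace

section

variable {m n 𝕜 : Type*} [Fintype m] [Fintype n] [NontriviallyNormedField 𝕜] [CompleteSpace 𝕜]

theorem Matrix.isBigO_of_forall_entry {α : Type*} {l : Filter α} {f : α → Matrix m n 𝕜}
    {g : α → ℝ} (h : ∀ i j, (fun x => f x i j) =O[l] g) : f =O[l] g :=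
  let e : (m → n → 𝕜) ≃L[𝕜] Matrix m n 𝕜 := (ofLinearEquiv 𝕜).toContinuousLinearEquiv
  ((e : (m → n → 𝕜) →L[𝕜] Matrix m n 𝕜).isBigO_comp (fun x => of.symm (f x)) l).trans
    (isBigO_pi.2 fun i => isBigO_pi.2 (h i))

noncomputable def Matrix.transposeCLM : Matrix m n 𝕜 →L[𝕜] Matrix n m 𝕜 :=
  (transposeLinearEquiv m n 𝕜 𝕜).toContinuousLinearEquiv.toContinuousLinearMap

end

section

variable {n : Type*} [Fintype n] [DecidableEq n]

theorem Matrix.exp_smul_mulVec_eq_sum {B : Matrix n n ℂ} {μ : ℂ} {v : n → ℂ} {k : ℕ}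
    (hv : (B - μ • 1) ^ k *ᵥ v = 0) (z : ℂ) :
    exp (z • B) *ᵥ v =
      Complex.exp (z * μ) • ∑ i ∈ Finset.range k, (z ^ i / i !) • ((B - μ • 1) ^ i *ᵥ v) := by
  set N := B - μ • 1
  have hsplit : z • B = algebraMap ℂ _ (z * μ) + z • N := by
    simp only [N, Algebra.algebraMap_eq_smul_one, smul_sub, smul_smul, add_sub_cancel]
  rw [hsplit, NormedSpace.exp_add_of_commute (Algebra.commute_algebraMap_left _ _),
    ← algebraMap_exp_comm, ← Complex.exp_eq_exp_ℂ, ← mulVec_mulVec,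
    Algebra.algebraMap_eq_smul_one, smul_mulVec, one_mulVec]
  congr 1
  have hsum := (exp_series_hasSum_exp' (𝕂 := ℂ) (z • N)).map (mulVec.addMonoidHomLeft v)
    (continuous_id.matrix_mulVec continuous_const)
  refine hsum.unique (hasSum_sum_of_ne_finset_zero fun i hi => ?_) |>.trans
    (Finset.sum_congr rfl fun i _ => ?_)
  · have hi : k ≤ i := by simpa using hi
    simp [mulVec.addMonoidHomLeft, smul_pow, ← pow_sub_mul_pow N hi, smul_mulVec,
      ← mulVec_mulVec, hv]
  · simp [mulVec.addMonoidHomLeft, smul_pow, smul_smul, div_eq_inv_mul, smul_mulVec]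

theorem isBigO_cexp_mul_pow_div_factorial {μ : ℂ} {c : ℝ} (hμ : μ.re < c) (i : ℕ) :
    (fun t : ℝ => Complex.exp (t * μ) * ((t : ℂ) ^ i / i !)) =O[atTop]
      fun t => Real.exp (c * t) := by
  have hexp : (fun t : ℝ => Complex.exp (t * μ)) =O[atTop] fun t => Real.exp (μ.re * t) :=
    isBigO_of_le _ fun t => by simp [Complex.norm_exp, mul_comm]
  have hpow : (fun t : ℝ => (t : ℂ) ^ i / i !) =O[atTop] fun t => Real.exp ((c - μ.re) * t) := by
    refine (isBigO_of_le _ fun t => ?_).trans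
      ((isLittleO_pow_exp_pos_mul_atTop i (sub_pos.2 hμ)).isBigO.const_mul_left (i ! : ℝ)⁻¹)
    simp [div_eq_inv_mul]
  refine (hexp.mul hpow).congr_right fun t => ?_
  rw [← Real.exp_add]
  ring_nf

theorem Matrix.isBigO_exp_smul_mulVec_of_mem_maxGenEigenspace {B : Matrix n n ℂ} {μ : ℂ}
    {v : n → ℂ} (hv : v ∈ Module.End.maxGenEigenspace (toLin' B) μ) {c : ℝ} (hμ : μ.re < c) :
    (fun t : ℝ => exp ((t : ℂ) • B) *ᵥ v) =O[atTop] fun t => Real.exp (c * t) := by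
  obtain ⟨k, hk⟩ := (Module.End.mem_maxGenEigenspace _ _ _).1 hv
  have hkv : (B - μ • 1) ^ k *ᵥ v = 0 := by
    rwa [Module.End.one_eq_id, ← toLin'_one, ← map_smul, ← map_sub, ← toLin'_pow,
      toLin'_apply] at hk
  simp_rw [exp_smul_mulVec_eq_sum hkv, Finset.smul_sum, smul_smul]
  exact IsBigO.fun_sum fun i _ =>
    (isBigO_of_le' _ fun t => (norm_smul_le _ _).trans_eq (mul_comm _ _)).trans
      (isBigO_cexp_mul_pow_div_factorial hμ i)

theorem Matrix.isBigO_exp_smul_mulVec {B : Matrix n n ℂ} {c : ℝ}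
    (hB : ∀ μ ∈ spectrum ℂ B, μ.re < c) (v : n → ℂ) :
    (fun t : ℝ => exp ((t : ℂ) • B) *ᵥ v) =O[atTop] fun t => Real.exp (c * t) := by
  have hv : v ∈ ⨆ μ, Module.End.maxGenEigenspace (toLin' B) μ := by
    rw [Module.End.iSup_maxGenEigenspace_eq_top]; trivial
  refine Submodule.iSup_induction _ (motive := fun v => (fun t : ℝ => exp ((t : ℂ) • B) *ᵥ v)
    =O[atTop] fun t => Real.exp (c * t)) hv (fun μ w hw => ?_) ?_ fun x y hx hy => ?_
  · rcases eq_or_ne w 0 with rfl | hw0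
    · simpa only [mulVec_zero] using isBigO_zero _ _
    have hμ : Module.End.HasUnifEigenvalue (toLin' B) μ ⊤ :=
      (Submodule.ne_bot_iff _).2 ⟨w, hw, hw0⟩
    rw [Module.End.hasUnifEigenvalue_iff_hasUnifEigenvalue_one (by simp)] at hμ
    exact isBigO_exp_smul_mulVec_of_mem_maxGenEigenspace hw
      (hB μ (spectrum_toLin' B ▸ hμ.mem_spectrum))
  · simpa only [mulVec_zero] using isBigO_zero _ _
  · simpa [mulVec_add] using hx.add hy

theorem Matrix.map_algebraMap_exp_smul (A : Matrix n n ℝ) (t : ℝ) :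
    (exp (t • A)).map (algebraMap ℝ ℂ) = exp ((t : ℂ) • A.map (algebraMap ℝ ℂ)) := by
  let f : Matrix n n ℝ →ₐ[ℝ] Matrix n n ℂ := (Algebra.ofId ℝ ℂ).mapMatrix
  have hf : f (t • A) = (t : ℂ) • A.map (algebraMap ℝ ℂ) := by
    ext i j
    simp [f]
  exact hf ▸ map_exp f f.toLinearMap.continuous_of_finiteDimensional (t • A)

theorem Matrix.isBigO_exp_smul {A : Matrix n n ℝ} {c : ℝ}
    (hA : ∀ μ ∈ spectrum ℂ (A.map (algebraMap ℝ ℂ)), μ.re < c) :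
    (fun t : ℝ => exp (t • A)) =O[atTop] fun t => Real.exp (c * t) := by
  refine isBigO_of_forall_entry fun i j => (isBigO_of_le _ fun t => ?_).trans
    (isBigO_pi.1 (isBigO_exp_smul_mulVec hA (Pi.single j 1)) i)
  rw [← map_algebraMap_exp_smul, mulVec_single_one]
  simp

end

section

variable {n : Type*} [Fintype n] [DecidableEq n]

noncomputable def Matrix.expGramian (A : Matrix n n ℝ) : Matrix n n ℝ :=
  ∫ t in Ioi (0 : ℝ), exp (t • A) * (exp (t • A))ᵀ

theorem Matrix.hasDerivAt_exp_smul_mul_transpose (A : Matrix n n ℝ) (t : ℝ) :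
    HasDerivAt (fun s : ℝ => exp (s • A) * (exp (s • A))ᵀ)
      (A * (exp (t • A) * (exp (t • A))ᵀ) + exp (t • A) * (exp (t • A))ᵀ * Aᵀ) t := by
  have hX := hasDerivAt_exp_smul_const' (𝕂 := ℝ) A t
  have hXt : HasDerivAt (fun s : ℝ => (exp (s • A))ᵀ) (A * exp (t • A))ᵀ t :=
    (transposeCLM : Matrix n n ℝ →L[ℝ] Matrix n n ℝ).hasFDerivAt.comp_hasDerivAt t hX
  refine (hX.mul hXt).congr_deriv ?_
  simp only [transpose_mul, Matrix.mul_assoc]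

variable {A : Matrix n n ℝ} {c : ℝ}

theorem Matrix.isBigO_exp_smul_mul_transpose
    (hA : (fun t : ℝ => exp (t • A)) =O[atTop] fun t => Real.exp (c * t)) :
    (fun t : ℝ => exp (t • A) * (exp (t • A))ᵀ) =O[atTop] fun t => Real.exp (2 * c * t) := by
  have hAt : (fun t : ℝ => (exp (t • A))ᵀ) =O[atTop] fun t => Real.exp (c * t) :=
    ((transposeCLM : Matrix n n ℝ →L[ℝ] _).isBigO_comp _ _).trans hA
  refine (hA.mul hAt).congr_right fun t => ?_
  rw [← Real.exp_add]
  ring_nf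

theorem Matrix.integrableOn_exp_smul_mul_transpose (hc : c < 0)
    (hA : (fun t : ℝ => exp (t • A)) =O[atTop] fun t => Real.exp (c * t)) :
    IntegrableOn (fun t : ℝ => exp (t • A) * (exp (t • A))ᵀ) (Ioi 0) := by
  have hcont : Continuous fun t : ℝ => exp (t • A) * (exp (t • A))ᵀ :=
    continuous_iff_continuousAt.2 fun t => (hasDerivAt_exp_smul_mul_transpose A t).continuousAt
  have hexp : IntegrableOn (fun t : ℝ => Real.exp (2 * c * t)) (Ioi 0) := by
    simpa using exp_neg_integrableOn_Ioi 0 (b := -(2 * c)) (by linarith)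
  exact ((hcont.continuousOn.locallyIntegrableOn measurableSet_Ici).integrableOn_of_isBigO_atTop
    (isBigO_exp_smul_mul_transpose hA) ⟨Ioi 0, Ioi_mem_atTop 0, hexp⟩).mono_set
    Ioi_subset_Ici_self

theorem Matrix.tendsto_exp_smul_mul_transpose_atTop (hc : c < 0)
    (hA : (fun t : ℝ => exp (t • A)) =O[atTop] fun t => Real.exp (c * t)) :
    Tendsto (fun t : ℝ => exp (t • A) * (exp (t • A))ᵀ) atTop (𝓝 0) :=
  (isBigO_exp_smul_mul_transpose hA).trans_tendsto <|
    Real.tendsto_exp_atBot.comp (tendsto_id.const_mul_atTop_of_neg (by linarith))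

theorem Matrix.mul_expGramian_add_expGramian_mul_transpose (hc : c < 0)
    (hA : (fun t : ℝ => exp (t • A)) =O[atTop] fun t => Real.exp (c * t)) :
    A * expGramian A + expGramian A * Aᵀ = -1 := by
  let L : Matrix n n ℝ →L[ℝ] Matrix n n ℝ :=
    ContinuousLinearMap.mul ℝ _ A + (ContinuousLinearMap.mul ℝ _).flip Aᵀ
  have hint := integrableOn_exp_smul_mul_transpose hc hA
  have hFTC := integral_Ioi_of_hasDerivAt_of_tendsto'
    (fun t _ => hasDerivAt_exp_smul_mul_transpose A t) (L.integrable_comp hint)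
    (tendsto_exp_smul_mul_transpose_atTop hc hA)
  simp only [zero_smul, exp_zero, transpose_one, one_mul, zero_sub] at hFTC
  exact (L.integral_comp_comm hint).symm.trans hFTC

theorem Matrix.posDef_expGramian (hc : c < 0)
    (hA : (fun t : ℝ => exp (t • A)) =O[atTop] fun t => Real.exp (c * t)) :
    (expGramian A).PosDef := by
  have hint := integrableOn_exp_smul_mul_transpose hc hA
  refine posDef_iff_dotProduct_mulVec.2 ⟨?_, fun x hx => ?_⟩
  · simp only [IsHermitian, conjTranspose_eq_transpose_of_trivial]
    refine ((transposeCLM : Matrix n n ℝ →L[ℝ] _).integral_comp_comm hint).symm.trans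
      (integral_congr_ae (ae_of_all _ fun t => ?_))
    simp [transposeCLM]
  · let q : Matrix n n ℝ →L[ℝ] ℝ := LinearMap.toContinuousLinearMap
      { toFun := fun M => x ⬝ᵥ (M *ᵥ x)
        map_add' := fun M N => by simp [add_mulVec, dotProduct_add]
        map_smul' := fun c M => by simp [smul_mulVec, dotProduct_smul] }
    have hpos : ∀ t : ℝ, 0 < q (exp (t • A) * (exp (t • A))ᵀ) := fun t => by
      have hx' : (exp (t • A))ᵀ *ᵥ x ≠ 0 := by
        rw [← mulVec_zero (exp (t • A))ᵀ]
        exact (mulVec_injective_iff_isUnit.2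
          ((isUnit_transpose _).2 (NormedSpace.isUnit_exp _))).ne hx
      simpa [q, ← mulVec_mulVec, dotProduct_mulVec, ← mulVec_transpose] using
        dotProduct_star_self_pos_iff.2 hx'
    calc 0 < ∫ t in Ioi (0 : ℝ), q (exp (t • A) * (exp (t • A))ᵀ) := by
          rw [setIntegral_pos_iff_support_of_nonneg_ae (ae_of_all _ fun t => (hpos t).le)
            (q.integrable_comp hint), Function.support_eq_univ fun t => (hpos t).ne',
            univ_inter, Real.volume_Ioi]
          exact ENNReal.zero_lt_top
      _ = star x ⬝ᵥ (expGramian A *ᵥ x) := q.integral_comp_comm hint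

end

theorem Matrix.exists_skew_sub_posDef_mul_posDef {n : Type*} [Fintype n] [DecidableEq n]
    {A P S : Matrix n n ℝ} (hP : P.PosDef) (hS : S.PosDef) (h : A * P + P * Aᵀ = -S) :
    ∃ K R Q : Matrix n n ℝ, Kᵀ = -K ∧ R.PosDef ∧ Q.PosDef ∧ A = (K - R) * Q := by
  have hPt : Pᵀ = P := hP.isHermitian
  refine ⟨(2⁻¹ : ℝ) • (A * P - P * Aᵀ), (2⁻¹ : ℝ) • S, P⁻¹, ?_, hS.smul (by norm_num), hP.inv, ?_⟩
  · rw [transpose_smul, transpose_sub, transpose_mul, transpose_mul, hPt, transpose_transpose,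
      ← smul_neg, neg_sub]
  · have hKR : (2⁻¹ : ℝ) • (A * P - P * Aᵀ) - (2⁻¹ : ℝ) • S = A * P := by
      rw [← neg_eq_iff_eq_neg.2 h]
      module
    rw [hKR, mul_nonsing_inv_cancel_right _ _ ((isUnit_iff_isUnit_det P).1 hP.isUnit)]

theorem stmt2_general (r : ℕ) (A : Matrix (Fin r) (Fin r) ℝ)
    (hA : ∀ μ ∈ spectrum ℂ (A.map (algebraMap ℝ ℂ)), μ.re < 0) :
    ∃ K R Q : Matrix (Fin r) (Fin r) ℝ,
      Kᵀ = -K ∧ R.PosDef ∧ Q.PosDef ∧ A = (K - R) * Q := by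
  obtain ⟨c, hAc, hc⟩ := (((eventually_all_finite (Matrix.finite_spectrum _)).2 fun μ hμ =>
    eventually_nhdsWithin_of_eventually_nhds (eventually_gt_nhds (hA μ hμ))).and
    (self_mem_nhdsWithin (s := Iio (0 : ℝ)))).exists
  have hdecay := isBigO_exp_smul hAc
  exact exists_skew_sub_posDef_mul_posDef (posDef_expGramian hc hdecay) PosDef.one
    (mul_expGramian_add_expGramian_mul_transpose hc hdecay)

/-- Proposition 1 (Lemma 2 in Gillis–Sharma), necessity direction:
every Hurwitz matrix `A` can be written as `A = (K - R) * Q` with `K` skew-symmetric,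
`R` symmetric positive definite, and `Q` symmetric positive definite. -/
theorem stmt2 (r : ℕ) (hr : 0 < r) (A : Matrix (Fin r) (Fin r) ℝ)
    (hA : ∀ μ ∈ spectrum ℂ (A.map (algebraMap ℝ ℂ)), μ.re < 0) :
    ∃ K R Q : Matrix (Fin r) (Fin r) ℝ,
      Kᵀ = -K ∧ R.PosDef ∧ Q.PosDef ∧ A = (K - R) * Q :=
  stmt2_general r A hA
end

section
/- Let r be a positive natural number, let Q be a symmetric r×r real matrix, and let H : Fin r → Fin r → Fin r → ℝ be a third-order tensor. Suppose that for every k ∈ Fin r there exists a skew-symmetric r×r real matrix S_k (S_kᵀ = -S_k) such that the k-th frontal slice of H equals S_k * Q, i.e., H i j k = Σ_l (S_k) i l * Q l j for all i, j. Then for every z ∈ ℝ^r, z ⬝ᵥ (Q.mulVec (g z)) + (g z) ⬝ᵥ (Q.mulVec z) = 0, where the quadratic contraction g z ∈ ℝ^r is defined componentwise by (g z) i = Σ_{j,k} H i j k * z j * z k. -/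
/-!
Writing `w = Q z`, the contraction `H : z zᵀ` equals `∑ₖ zₖ Sₖ w`, so
`(H : z zᵀ)ᵀ Q z = ∑ₖ zₖ (wᵀ Sₖ w)`, and every quadratic form of a skew-symmetric matrix
vanishes. Symmetry of `Q` makes the two summands of the claim equal.
-/

open Matrix

variable {n R : Type*} [Fintype n]

theorem dotProduct_mulVec_self_eq_zero_of_transpose_eq_neg
    [CommRing R] [NoZeroDivisors R] [CharZero R]
    {S : Matrix n n R} (hS : Sᵀ = -S) (w : n → R) : w ⬝ᵥ S *ᵥ w = 0 :=
  self_eq_neg.mp <| calc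
    w ⬝ᵥ S *ᵥ w = Sᵀ *ᵥ w ⬝ᵥ w := by rw [dotProduct_mulVec, mulVec_transpose]
    _ = -(w ⬝ᵥ S *ᵥ w) := by rw [hS, neg_mulVec, neg_dotProduct, dotProduct_comm]

def quadContraction [CommSemiring R] (H : n → n → n → R) (z : n → R) : n → R :=
  fun i => ∑ j, ∑ k, H i j k * z j * z k

theorem quadContraction_eq_sum_smul_mulVec [CommSemiring R] {H : n → n → n → R}
    {M : n → Matrix n n R} (hM : ∀ i j k, H i j k = M k i j) (z : n → R) :
    quadContraction H z = ∑ k, z k • M k *ᵥ z := by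
  ext i
  simp only [quadContraction, hM, Finset.sum_apply, Pi.smul_apply, smul_eq_mul, mulVec,
    dotProduct, Finset.mul_sum]
  rw [Finset.sum_comm]
  exact Finset.sum_congr rfl fun k _ => Finset.sum_congr rfl fun j _ => by ring

theorem quadContraction_dotProduct_mulVec_eq_zero [CommRing R] [NoZeroDivisors R] [CharZero R]
    {H : n → n → n → R} {S : n → Matrix n n R} (hS : ∀ k, (S k)ᵀ = -S k) (Q : Matrix n n R)
    (hH : ∀ i j k, H i j k = (S k * Q) i j) (z : n → R) :
    quadContraction H z ⬝ᵥ Q *ᵥ z = 0 := by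
  rw [quadContraction_eq_sum_smul_mulVec hH, sum_dotProduct]
  refine Finset.sum_eq_zero fun k _ => ?_
  rw [smul_dotProduct, ← mulVec_mulVec, dotProduct_comm,
    dotProduct_mulVec_self_eq_zero_of_transpose_eq_neg (hS k), smul_zero]

theorem stmt4_general (r : ℕ) (Q : Matrix (Fin r) (Fin r) ℝ) (hQ : Qᵀ = Q)
    (H : Fin r → Fin r → Fin r → ℝ)
    (hH : ∀ k : Fin r, ∃ S : Matrix (Fin r) (Fin r) ℝ, Sᵀ = -S ∧
      ∀ i j : Fin r, H i j k = ∑ l, S i l * Q l j)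
    (g : (Fin r → ℝ) → (Fin r → ℝ))
    (hg : ∀ (z : Fin r → ℝ) (i : Fin r), g z i = ∑ j, ∑ k, H i j k * z j * z k) :
    ∀ z : Fin r → ℝ, z ⬝ᵥ Q.mulVec (g z) + (g z) ⬝ᵥ Q.mulVec z = 0 := by
  intro z
  choose S hS hSQ using hH
  have hgz : g z = quadContraction H z := funext (hg z)
  have hzero : g z ⬝ᵥ Q *ᵥ z = 0 := hgz ▸
    quadContraction_dotProduct_mulVec_eq_zero hS Q (fun i j k => by rw [hSQ, mul_apply]) z
  have hsymm : z ⬝ᵥ Q *ᵥ g z = g z ⬝ᵥ Q *ᵥ z := by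
    rw [dotProduct_mulVec, ← mulVec_transpose, hQ, dotProduct_comm]
  rw [hsymm, hzero, add_zero]

/-- Proposition 2 (energy-preserving quadratic tensor): if every frontal slice of `H`
is of the form `S_k * Q` with `S_k` skew-symmetric and `Q` symmetric, then the quadratic
contraction `g z = H : z zᵀ` satisfies `zᵀ Q (g z) + (g z)ᵀ Q z = 0` for all `z`. -/
theorem stmt4 (r : ℕ) (hr : 0 < r) (Q : Matrix (Fin r) (Fin r) ℝ) (hQ : Qᵀ = Q)
    (H : Fin r → Fin r → Fin r → ℝ)
    (hH : ∀ k : Fin r, ∃ S : Matrix (Fin r) (Fin r) ℝ, Sᵀ = -S ∧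
      ∀ i j : Fin r, H i j k = ∑ l, S i l * Q l j)
    (g : (Fin r → ℝ) → (Fin r → ℝ))
    (hg : ∀ (z : Fin r → ℝ) (i : Fin r), g z i = ∑ j, ∑ k, H i j k * z j * z k) :
    ∀ z : Fin r → ℝ, z ⬝ᵥ Q.mulVec (g z) + (g z) ⬝ᵥ Q.mulVec z = 0 :=
  stmt4_general r Q hQ H hH g hg
end

section
/- Let n and r be positive natural numbers, let Ψ be a fixed n×r real matrix, and let Φ₀ be an n×r real matrix such that Ψᵀ * Φ₀ is invertible. Then the decoder map Φ ↦ Φ * (Ψᵀ * Φ)⁻¹, from n×r real matrices to n×r real matrices, has Fréchet derivative at Φ₀ given by the linear map δ ↦ (1 - Φ₀ * (Ψᵀ * Φ₀)⁻¹ * Ψᵀ) * δ * (Ψᵀ * Φ₀)⁻¹, where 1 denotes the n×n identity matrix. -/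
open Matrix

attribute [local instance] Matrix.normedAddCommGroup Matrix.normedSpace

/-!
With `A = Ψᵀ Φ₀`, the decoder is the product of the identity with inversion composed with the
linear map `Φ ↦ Ψᵀ Φ`. Inversion has derivative `δ ↦ -A⁻¹ δ A⁻¹` at `A`, so the chain and product
rules give the derivative `δ ↦ Φ₀ (-A⁻¹ Ψᵀ δ A⁻¹) + δ A⁻¹ = (1 - Φ₀ A⁻¹ Ψᵀ) δ A⁻¹`.
-/

namespace Matrix

variable {𝕜 : Type*} [NontriviallyNormedField 𝕜] [CompleteSpace 𝕜]
  {l m n : Type*} [Fintype l] [Fintype m] [Fintype n]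

def mulCLM : Matrix l m 𝕜 →L[𝕜] Matrix m n 𝕜 →L[𝕜] Matrix l n 𝕜 :=
  LinearMap.toContinuousLinearMap
    (LinearMap.toContinuousLinearMap.toLinearMap ∘ₗ mulLinearMap 𝕜)

@[simp]
theorem mulCLM_apply (A : Matrix l m 𝕜) (B : Matrix m n 𝕜) : mulCLM A B = A * B := rfl

theorem hasFDerivAt_inv [DecidableEq m] {A : Matrix m m 𝕜} (hA : IsUnit A) :
    HasFDerivAt (fun X : Matrix m m 𝕜 => X⁻¹) (-(mulCLM A⁻¹).comp (mulCLM.flip A⁻¹)) A := by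
  suffices ∃ L : Matrix m m 𝕜 →L[𝕜] Matrix m m 𝕜,
      (∀ δ, L δ = -(A⁻¹ * δ * A⁻¹)) ∧ HasFDerivAt (fun X : Matrix m m 𝕜 => X⁻¹) L A by
    obtain ⟨L, hL, hderiv⟩ := this
    convert hderiv
    ext1 δ
    simp [hL, mul_assoc]
    rfl
  -- `HasFDerivAt` only sees the topology, and the operator norm induces (definitionally) the same
  -- one as the entrywise sup norm; in that normed algebra the derivative of `Ring.inverse` is known.
  let _ := Matrix.linftyOpNormedRing (n := m) (α := 𝕜)
  let _ := Matrix.linftyOpNormedAlgebra (n := m) (α := 𝕜) (R := 𝕜)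
  have : HasSummableGeomSeries (Matrix m m 𝕜) := by
    have : @CompleteSpace (Matrix m m 𝕜)
        (Matrix.linftyOpNormedRing (n := m) (α := 𝕜)).toUniformSpace :=
      (inferInstance : CompleteSpace (Matrix m m 𝕜))
    infer_instance
  obtain ⟨u, rfl⟩ := hA
  have hinverse := hasFDerivAt_ringInverse (𝕜 := 𝕜) u
  rw [← funext nonsing_inv_eq_ringInverse] at hinverse
  exact ⟨_, fun δ => by rw [coe_units_inv]; rfl, hinverse⟩

theorem _root_.HasFDerivAt.matrix_mul {E : Type*} [NormedAddCommGroup E] [NormedSpace 𝕜 E]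
    {f : E → Matrix l m 𝕜} {g : E → Matrix m n 𝕜} {f' : E →L[𝕜] Matrix l m 𝕜}
    {g' : E →L[𝕜] Matrix m n 𝕜} {x : E} (hf : HasFDerivAt f f' x) (hg : HasFDerivAt g g' x) :
    HasFDerivAt (fun y => f y * g y)
      (mulCLM.precompR E (f x) g' + mulCLM.precompL E f' (g x)) x :=
  mulCLM.hasFDerivAt_of_bilinear hf hg

end Matrix

theorem stmt12_general (n r : ℕ)
    (Ψ Φ₀ : Matrix (Fin n) (Fin r) ℝ) (h : IsUnit (Ψᵀ * Φ₀)) :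
    ∃ L : Matrix (Fin n) (Fin r) ℝ →L[ℝ] Matrix (Fin n) (Fin r) ℝ,
      (∀ δ : Matrix (Fin n) (Fin r) ℝ,
        L δ = (1 - Φ₀ * (Ψᵀ * Φ₀)⁻¹ * Ψᵀ) * δ * (Ψᵀ * Φ₀)⁻¹) ∧
      HasFDerivAt (fun Φ : Matrix (Fin n) (Fin r) ℝ => Φ * (Ψᵀ * Φ)⁻¹) L Φ₀ := by
  have hinv := (hasFDerivAt_inv h).comp Φ₀ (mulCLM Ψᵀ).hasFDerivAt
  refine ⟨_, fun δ => ?_, HasFDerivAt.matrix_mul (hasFDerivAt_id Φ₀) hinv⟩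
  show Φ₀ * -((Ψᵀ * Φ₀)⁻¹ * (Ψᵀ * δ * (Ψᵀ * Φ₀)⁻¹)) + δ * (Ψᵀ * Φ₀)⁻¹ = _
  simp [Matrix.sub_mul, Matrix.mul_assoc, neg_add_eq_sub]

/-- Fréchet derivative of the decoder map `Φ ↦ Φ * (Ψᵀ * Φ)⁻¹` at a point `Φ₀` where
`Ψᵀ * Φ₀` is invertible: the derivative is `δ ↦ (1 - Φ₀ (Ψᵀ Φ₀)⁻¹ Ψᵀ) δ (Ψᵀ Φ₀)⁻¹`. -/
theorem stmt12 (n r : ℕ) (hn : 0 < n) (hr : 0 < r)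
    (Ψ Φ₀ : Matrix (Fin n) (Fin r) ℝ) (h : IsUnit (Ψᵀ * Φ₀)) :
    ∃ L : Matrix (Fin n) (Fin r) ℝ →L[ℝ] Matrix (Fin n) (Fin r) ℝ,
      (∀ δ : Matrix (Fin n) (Fin r) ℝ,
        L δ = (1 - Φ₀ * (Ψᵀ * Φ₀)⁻¹ * Ψᵀ) * δ * (Ψᵀ * Φ₀)⁻¹) ∧
      HasFDerivAt (fun Φ : Matrix (Fin n) (Fin r) ℝ => Φ * (Ψᵀ * Φ)⁻¹) L Φ₀ :=
  stmt12_general n r Ψ Φ₀ h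
end
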